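/- arXiv:1909.09763 — 2 statements merged into one kernel-verified Lean document; each statement's English description precedes it below -/
import Mathlib

section
/- Define f_0(s) = s·(1 − φ(h(s)))/(1 − h(s)) and P(s) = 1/(1 − f_0(s)) for s ∈ (0,1). Under Assumption (H), lim_{s→1−} P(s)·(1−s)^{α} = 1/((1−α)·c). -/
open MeasureTheory ProbabilityTheory Filter Topology

/-- `φ(s) = q + ∑_{n≥0} p_n s^{n+1}`. -/
noncomputable def phi (q : ℝ) (p : ℕ → ℝ) (s : ℝ) : ℝ :=
  q + ∑' n : ℕ, p n * s ^ (n + 1)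

/-- `φ'(s) = ∑_{n≥0} (n+1) p_n s^n`. -/
noncomputable def phiDeriv (p : ℕ → ℝ) (s : ℝ) : ℝ :=
  ∑' n : ℕ, (n + 1 : ℝ) * p n * s ^ n

/-- `h s` is the minimal nonnegative solution `x ∈ [0,1]` of `x = s * φ x`, for every
`s ∈ [0,1]`. -/
def IsMinimalSolution (φ : ℝ → ℝ) (h : ℝ → ℝ) : Prop :=
  ∀ s ∈ Set.Icc (0 : ℝ) 1, h s ∈ Set.Icc (0 : ℝ) 1 ∧ h s = s * φ (h s) ∧
    ∀ y ∈ Set.Icc (0 : ℝ) 1, y = s * φ y → h s ≤ y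

open Set

namespace RenewalAux

variable {q : ℝ} {p : ℕ → ℝ}

lemma summable1 (hp : ∀ n, 0 ≤ p n) (hpsum : Summable p) {x : ℝ} (hx : |x| ≤ 1) :
    Summable fun n : ℕ => p n * x ^ (n + 1) := by
  apply Summable.of_norm_bounded hpsum
  intro n
  rw [norm_mul, norm_pow]
  calc ‖p n‖ * ‖x‖ ^ (n + 1) ≤ p n * 1 := by
        apply mul_le_mul
        · rw [Real.norm_eq_abs, abs_of_nonneg (hp n)]
        · exact pow_le_one₀ (norm_nonneg x) (by rwa [Real.norm_eq_abs])
        · positivity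
        · exact hp n
    _ = p n := mul_one _

lemma summable2 (hp : ∀ n, 0 ≤ p n) (hmoment : Summable (fun n : ℕ => (n + 1 : ℝ) * p n))
    {x : ℝ} (hx : |x| ≤ 1) :
    Summable fun n : ℕ => (n + 1 : ℝ) * p n * x ^ n := by
  apply Summable.of_norm_bounded hmoment
  intro n
  rw [norm_mul, norm_pow]
  calc ‖(n + 1 : ℝ) * p n‖ * ‖x‖ ^ n ≤ ((n+1:ℝ) * p n) * 1 := by
        apply mul_le_mul
        · rw [Real.norm_eq_abs, abs_of_nonneg (mul_nonneg (by positivity) (hp n))]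
        · exact pow_le_one₀ (norm_nonneg x) (by rwa [Real.norm_eq_abs])
        · positivity
        · exact mul_nonneg (by positivity) (hp n)
    _ = (n+1:ℝ) * p n := mul_one _

lemma hasDerivAt_phi (hp : ∀ n, 0 ≤ p n) (hmoment : Summable (fun n : ℕ => (n + 1 : ℝ) * p n))
    {x : ℝ} (hx : x ∈ Ioo (-1 : ℝ) 1) :
    HasDerivAt (phi q p) (phiDeriv p x) x := by
  have key : HasDerivAt (fun z => ∑' n : ℕ, p n * z ^ (n + 1)) (∑' n : ℕ, (n + 1 : ℝ) * p n * x ^ n) x := by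
    apply hasDerivAt_tsum_of_isPreconnected hmoment isOpen_Ioo
      (convex_Ioo (-1 : ℝ) 1).isPreconnected
      (g := fun n z => p n * z ^ (n + 1)) (g' := fun n z => (n + 1 : ℝ) * p n * z ^ n)
      ?_ ?_ (by norm_num : (0:ℝ) ∈ Ioo (-1:ℝ) 1) ?_ hx
    · intro n y _
      have := (hasDerivAt_pow (n + 1) y).const_mul (p n)
      exact this.congr_deriv (by rw [Nat.add_sub_cancel]; push_cast; ring)
    · intro n y hy
      have hy1 : |y| ≤ 1 := by
        rw [abs_le]; exact ⟨hy.1.le, hy.2.le⟩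
      rw [norm_mul, norm_pow]
      calc ‖(n + 1 : ℝ) * p n‖ * ‖y‖ ^ n ≤ ((n+1:ℝ) * p n) * 1 := by
            apply mul_le_mul
            · rw [Real.norm_eq_abs, abs_of_nonneg (mul_nonneg (by positivity) (hp n))]
            · exact pow_le_one₀ (norm_nonneg y) (by rwa [Real.norm_eq_abs])
            · positivity
            · exact mul_nonneg (by positivity) (hp n)
        _ = (n+1:ℝ) * p n := mul_one _
    · apply Summable.of_norm_bounded (summable_zero : Summable (fun _ : ℕ => (0:ℝ)))
      intro n; simp
  unfold phi phiDeriv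
  exact key.const_add q


lemma phi_one (htotal : q + ∑' n : ℕ, p n = 1) : phi q p 1 = 1 := by
  unfold phi; simpa using htotal

lemma phi_pos (hq : 0 < q) (hp : ∀ n, 0 ≤ p n) {x : ℝ} (hx : x ∈ Icc (0:ℝ) 1) :
    0 < phi q p x := by
  unfold phi
  have : 0 ≤ ∑' n : ℕ, p n * x ^ (n + 1) :=
    tsum_nonneg fun n => mul_nonneg (hp n) (pow_nonneg hx.1 _)
  linarith

lemma phi_le_one (hp : ∀ n, 0 ≤ p n) (hpsum : Summable p)
    (htotal : q + ∑' n : ℕ, p n = 1) {x : ℝ} (hx : x ∈ Icc (0:ℝ) 1) :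
    phi q p x ≤ 1 := by
  unfold phi
  have habs : |x| ≤ 1 := by rw [abs_of_nonneg hx.1]; exact hx.2
  have h1 : ∑' n : ℕ, p n * x ^ (n + 1) ≤ ∑' n : ℕ, p n := by
    apply Summable.tsum_le_tsum _ (summable1 hp hpsum habs) hpsum
    intro n
    calc p n * x ^ (n + 1) ≤ p n * 1 :=
          mul_le_mul_of_nonneg_left (pow_le_one₀ hx.1 hx.2) (hp n)
      _ = p n := mul_one _
  linarith

lemma le_phi (hp : ∀ n, 0 ≤ p n) (hpsum : Summable p)
    (htotal : q + ∑' n : ℕ, p n = 1)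
    (hmoment : Summable (fun n : ℕ => (n + 1 : ℝ) * p n))
    (hcrit : ∑' n : ℕ, (n + 1 : ℝ) * p n = 1) {x : ℝ} (hx : x ∈ Icc (0:ℝ) 1) :
    x ≤ phi q p x := by
  have habs : |x| ≤ 1 := by rw [abs_of_nonneg hx.1]; exact hx.2
  -- 1 - phi x = ∑ p n (1 - x^(n+1)) ≤ (1-x) ∑ (n+1) p n = 1 - x
  have hsum1 := summable1 hp hpsum habs
  have key : ∑' n : ℕ, p n - ∑' n : ℕ, p n * x ^ (n + 1) ≤ 1 - x := by
    rw [← Summable.tsum_sub hpsum hsum1]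
    have : ∑' n : ℕ, (1 - x) * ((n + 1 : ℝ) * p n) = 1 - x := by
      rw [tsum_mul_left, hcrit, mul_one]
    rw [← this]
    apply Summable.tsum_le_tsum _ (hpsum.sub hsum1) (hmoment.mul_left _)
    intro n
    have hbern : 1 + (n + 1 : ℕ) * (x - 1) ≤ (1 + (x - 1)) ^ (n + 1 : ℕ) :=
      one_add_mul_le_pow (by linarith [hx.1] : (-2:ℝ) ≤ x - 1) (n + 1)
    have hxp : 1 - x ^ (n + 1) ≤ (n + 1 : ℝ) * (1 - x) := by
      have : (1 : ℝ) + (x - 1) = x := by ring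
      rw [this] at hbern
      push_cast at hbern
      nlinarith
    calc p n - p n * x ^ (n + 1) = p n * (1 - x ^ (n + 1)) := by ring
      _ ≤ p n * ((n + 1 : ℝ) * (1 - x)) := mul_le_mul_of_nonneg_left hxp (hp n)
      _ = (1 - x) * ((n + 1 : ℝ) * p n) := by ring
  unfold phi
  have hq1 : q = 1 - ∑' n : ℕ, p n := by linarith
  linarith

lemma phiDeriv_le_one (hp : ∀ n, 0 ≤ p n)
    (hmoment : Summable (fun n : ℕ => (n + 1 : ℝ) * p n))
    (hcrit : ∑' n : ℕ, (n + 1 : ℝ) * p n = 1) {x : ℝ} (hx : x ∈ Icc (0:ℝ) 1) :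
    phiDeriv p x ≤ 1 := by
  have habs : |x| ≤ 1 := by rw [abs_of_nonneg hx.1]; exact hx.2
  unfold phiDeriv
  have key : ∑' n : ℕ, (n + 1 : ℝ) * p n * x ^ n ≤ ∑' n : ℕ, (n + 1 : ℝ) * p n := by
    apply Summable.tsum_le_tsum _ (summable2 hp hmoment habs) hmoment
    intro n
    calc (n + 1 : ℝ) * p n * x ^ n ≤ (n + 1 : ℝ) * p n * 1 :=
        mul_le_mul_of_nonneg_left (pow_le_one₀ hx.1 hx.2)
          (mul_nonneg (by positivity) (hp n))
    _ = (n + 1 : ℝ) * p n := mul_one _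
  rw [hcrit] at key
  exact key

lemma phiDeriv_lt_one (hp : ∀ n, 0 ≤ p n) (hp0 : p 0 < 1)
    (hmoment : Summable (fun n : ℕ => (n + 1 : ℝ) * p n))
    (hcrit : ∑' n : ℕ, (n + 1 : ℝ) * p n = 1) {x : ℝ} (hx : x ∈ Ico (0:ℝ) 1) :
    phiDeriv p x < 1 := by
  have habs : |x| ≤ 1 := by rw [abs_of_nonneg hx.1]; exact hx.2.le
  -- get m ≥ 1 with p m > 0
  obtain ⟨m, hm1, hpm⟩ : ∃ m, 1 ≤ m ∧ 0 < p m := by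
    by_contra hcon
    push_neg at hcon
    have hzero : ∀ n, 1 ≤ n → p n = 0 := fun n hn => le_antisymm (hcon n hn) (hp n)
    have : ∑' n : ℕ, (n + 1 : ℝ) * p n = p 0 := by
      rw [tsum_eq_single 0]
      · norm_num
      · intro n hn
        rw [hzero n (Nat.one_le_iff_ne_zero.2 hn), mul_zero]
    rw [hcrit] at this
    linarith
  unfold phiDeriv
  have key : ∑' n : ℕ, (n + 1 : ℝ) * p n * x ^ n < ∑' n : ℕ, (n + 1 : ℝ) * p n := by
    apply Summable.tsum_lt_tsum_of_nonneg (i := m)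
    · intro n
      exact mul_nonneg (mul_nonneg (by positivity) (hp n)) (pow_nonneg hx.1 _)
    · intro n
      calc (n + 1 : ℝ) * p n * x ^ n ≤ (n + 1 : ℝ) * p n * 1 :=
            mul_le_mul_of_nonneg_left (pow_le_one₀ hx.1 hx.2.le)
              (mul_nonneg (by positivity) (hp n))
        _ = (n + 1 : ℝ) * p n := mul_one _
    · have hxm : x ^ m < 1 := pow_lt_one₀ hx.1 hx.2 (by omega)
      have hpos : 0 < (m + 1 : ℝ) * p m := by positivity
      nlinarith
    · exact hmoment
  rw [hcrit] at key
  exact key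

end RenewalAux

open RenewalAux

/-- Lemma 7, left continuous case: with `f₀(s) = s(1 − φ(h(s)))/(1 − h(s))` and
`P(s) = 1/(1 − f₀(s))`, under Assumption (H), `P(s)(1−s)^α → 1/((1−α)c)` as `s → 1−`. -/
theorem renewal_function_asymptotics_left
    (q : ℝ) (p : ℕ → ℝ) (hq : 0 < q) (hp : ∀ n, 0 ≤ p n)
    (hpsum : Summable p) (htotal : q + ∑' n : ℕ, p n = 1) (hp0 : p 0 < 1)
    (hmoment : Summable (fun n : ℕ => (n + 1 : ℝ) * p n))
    (hcrit : ∑' n : ℕ, (n + 1 : ℝ) * p n = 1)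
    (h : ℝ → ℝ) (hmin : IsMinimalSolution (phi q p) h)
    (α c : ℝ) (hα : α ∈ Set.Ioo (0 : ℝ) 1) (hc : 0 < c)
    (hH : Tendsto (fun s => (1 - s * phiDeriv p (h s)) / (1 - s) ^ α)
      (𝓝[<] (1 : ℝ)) (𝓝 c))
:
    Tendsto (fun s => 1 / (1 - s * (1 - phi q p (h s)) / (1 - h s)) * (1 - s) ^ α)
      (𝓝[<] (1 : ℝ)) (𝓝 (1 / ((1 - α) * c))) := by
  obtain ⟨hα0, hα1⟩ := hα
  have hIoo : Ioo (0:ℝ) 1 ∈ 𝓝[<] (1:ℝ) := Ioo_mem_nhdsLT_of_mem (by norm_num)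
  have hφ1 : phi q p 1 = 1 := phi_one htotal
  have hφpos : ∀ x ∈ Icc (0:ℝ) 1, 0 < phi q p x := fun x hx => phi_pos hq hp hx
  have hφle : ∀ x ∈ Icc (0:ℝ) 1, phi q p x ≤ 1 := fun x hx => phi_le_one hp hpsum htotal hx
  have hφge : ∀ x ∈ Icc (0:ℝ) 1, x ≤ phi q p x :=
    fun x hx => le_phi hp hpsum htotal hmoment hcrit hx
  have hD : ∀ x ∈ Ioo (-1:ℝ) 1, HasDerivAt (phi q p) (phiDeriv p x) x :=
    fun x hx => hasDerivAt_phi hp hmoment hx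
  have hDψ : ∀ x ∈ Ioo (-1:ℝ) 1, HasDerivAt (fun y => phi q p y - y) (phiDeriv p x - 1) x :=
    fun x hx => (hD x hx).sub (hasDerivAt_id x)
  have hsub : Ioo (0:ℝ) 1 ⊆ Ioo (-1:ℝ) 1 := Ioo_subset_Ioo (by norm_num) le_rfl
  have hψcont : ContinuousOn (fun y => phi q p y - y) (Icc (0:ℝ) 1) := by
    intro x hx
    rcases eq_or_lt_of_le hx.2 with h1 | h1
    · subst h1
      have h10 : phi q p 1 - 1 = 0 := by rw [hφ1]; ring
      unfold ContinuousWithinAt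
      simp only
      rw [h10]
      have lim : Tendsto (fun t : ℝ => 1 - t) (𝓝[Icc (0:ℝ) 1] (1:ℝ)) (𝓝 0) := by
        have : Tendsto (fun t : ℝ => 1 - t) (𝓝 (1:ℝ)) (𝓝 (1 - 1)) :=
          (continuous_const.sub continuous_id).tendsto 1
        rw [show (1:ℝ) - 1 = 0 by ring] at this
        exact this.mono_left nhdsWithin_le_nhds
      apply squeeze_zero' (g := fun t : ℝ => 1 - t)
        (Filter.eventually_of_mem self_mem_nhdsWithin ?lo)
        (Filter.eventually_of_mem self_mem_nhdsWithin ?hi) lim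
      case lo => intro t ht; show (0:ℝ) ≤ phi q p t - t; linarith [hφge t ht]
      case hi => intro t ht; show phi q p t - t ≤ 1 - t; linarith [hφle t ht]
    · have hx1 : x ∈ Ioo (-1:ℝ) 1 := ⟨lt_of_lt_of_le (by norm_num) hx.1, h1⟩
      exact ((hDψ x hx1).continuousAt).continuousWithinAt
  have hψanti : StrictAntiOn (fun y => phi q p y - y) (Icc (0:ℝ) 1) := by
    apply strictAntiOn_of_deriv_neg (convex_Icc 0 1) hψcont
    intro x hx
    rw [interior_Icc] at hx
    rw [(hDψ x (hsub hx)).deriv]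
    have := phiDeriv_lt_one hp hp0 hmoment hcrit (x := x) ⟨hx.1.le, hx.2⟩
    linarith
  have hψpos : ∀ x ∈ Ico (0:ℝ) 1, 0 < phi q p x - x := by
    intro x hx
    have := hψanti ⟨hx.1, hx.2.le⟩ (right_mem_Icc.2 zero_le_one) hx.2
    simp only at this
    rw [hφ1] at this
    linarith
  have hφcont : ContinuousOn (phi q p) (Icc (0:ℝ) 1) := by
    have heq : phi q p = fun x => (phi q p x - x) + x := by funext x; ring
    rw [heq]
    exact hψcont.add continuousOn_id
  have huniq : ∀ s ∈ Ico (0:ℝ) 1, ∀ x ∈ Icc (0:ℝ) 1, ∀ y ∈ Icc (0:ℝ) 1,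
      x = s * phi q p x → y = s * phi q p y → x = y := by
    intro s hs x hx y hy hxe hye
    have hmono : StrictMonoOn (fun t => t - s * phi q p t) (Icc (0:ℝ) 1) := by
      apply strictMonoOn_of_deriv_pos (convex_Icc 0 1)
      · exact continuousOn_id.sub (continuousOn_const.mul hφcont)
      · intro t ht
        rw [interior_Icc] at ht
        have hd : HasDerivAt (fun t => t - s * phi q p t) (1 - s * phiDeriv p t) t :=
          (hasDerivAt_id t).sub ((hD t (hsub ht)).const_mul s)
        rw [hd.deriv]
        have h1 := phiDeriv_le_one hp hmoment hcrit (x := t) ⟨ht.1.le, ht.2.le⟩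
        nlinarith [hs.1, hs.2, mul_le_mul_of_nonneg_left h1 hs.1]
    apply hmono.injOn hx hy
    simp only
    rw [← hxe, ← hye]
    ring
  have hhmem : ∀ s ∈ Ico (0:ℝ) 1, h s ∈ Ico (0:ℝ) 1 := by
    intro s hs
    obtain ⟨h1, h2, _⟩ := hmin s ⟨hs.1, hs.2.le⟩
    refine ⟨h1.1, lt_of_le_of_ne h1.2 ?_⟩
    intro heq
    rw [heq, hφ1, mul_one] at h2
    exact absurd h2.symm (ne_of_lt hs.2)
  have hseq : ∀ s ∈ Ico (0:ℝ) 1, s = h s / phi q p (h s) := by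
    intro s hs
    obtain ⟨h1, h2, _⟩ := hmin s ⟨hs.1, hs.2.le⟩
    have hφh := hφpos _ h1
    field_simp
    linarith [h2]
  have hinv : ∀ x ∈ Ico (0:ℝ) 1, h (x / phi q p x) = x := by
    intro x hx
    have hxI : x ∈ Icc (0:ℝ) 1 := ⟨hx.1, hx.2.le⟩
    have hφx := hφpos x hxI
    have hψx := hψpos x hx
    have hs : x / phi q p x ∈ Ico (0:ℝ) 1 := by
      constructor
      · exact div_nonneg hx.1 hφx.le
      · rw [div_lt_one hφx]; linarith
    obtain ⟨hh1, hh2, _⟩ := hmin _ ⟨hs.1, hs.2.le⟩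
    exact huniq _ hs _ hh1 _ hxI hh2 (by field_simp)
  have hhtend : Tendsto h (𝓝[<] (1:ℝ)) (𝓝[<] (1:ℝ)) := by
    rw [tendsto_nhdsWithin_iff]
    constructor
    · rw [tendsto_order]
      constructor
      · intro b hb
        have haI : max b 0 ∈ Ico (0:ℝ) 1 :=
          ⟨le_max_right _ _, by rw [max_lt_iff]; exact ⟨hb, one_pos⟩⟩
        have hδ : 0 < phi q p (max b 0) - max b 0 := hψpos _ haI
        have hmem : Ioo (max 0 (1 - (phi q p (max b 0) - max b 0))) 1 ∈ 𝓝[<] (1:ℝ) := by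
          apply Ioo_mem_nhdsLT_of_mem
          constructor
          · rw [max_lt_iff]; constructor <;> linarith
          · exact le_rfl
        filter_upwards [hmem] with s hsmem
        have hs : s ∈ Ico (0:ℝ) 1 := ⟨le_trans (le_max_left _ _) hsmem.1.le, hsmem.2⟩
        have hx := hhmem s hs
        have hφh := hφpos _ ⟨hx.1, hx.2.le⟩
        have hφh1 := hφle _ ⟨hx.1, hx.2.le⟩
        have h2 := (hmin s ⟨hs.1, hs.2.le⟩).2.1
        have hψh : phi q p (h s) - h s = (1 - s) * phi q p (h s) := by
          linear_combination -h2
        have hslb : 1 - (phi q p (max b 0) - max b 0) < s :=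
          lt_of_le_of_lt (le_max_right _ _) hsmem.1
        have hlt : phi q p (h s) - h s < phi q p (max b 0) - max b 0 := by
          rw [hψh]; nlinarith
        have hfin : max b 0 < h s := by
          by_contra hcon
          push_neg at hcon
          rcases eq_or_lt_of_le hcon with he | hl
          · rw [he] at hlt; linarith
          · have := hψanti ⟨hx.1, hx.2.le⟩ ⟨haI.1, haI.2.le⟩ hl
            simp only at this
            linarith
        exact lt_of_le_of_lt (le_max_left b 0) hfin
      · intro b hb
        filter_upwards [hIoo] with s hs
        exact lt_of_le_of_lt ((hmin s ⟨hs.1.le, hs.2.le⟩).1.2) hb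
    · filter_upwards [hIoo] with s hs
      exact (hhmem s ⟨hs.1.le, hs.2⟩).2
  have hσtend : Tendsto (fun x => x / phi q p x) (𝓝[<] (1:ℝ)) (𝓝[<] (1:ℝ)) := by
    rw [tendsto_nhdsWithin_iff]
    constructor
    · apply tendsto_of_tendsto_of_tendsto_of_le_of_le'
        (tendsto_id.mono_left nhdsWithin_le_nhds) tendsto_const_nhds
      · filter_upwards [hIoo] with x hx
        have hφx := hφpos x ⟨hx.1.le, hx.2.le⟩
        have hφx1 := hφle x ⟨hx.1.le, hx.2.le⟩
        show id x ≤ x / phi q p x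
        simp only [id_eq]
        rw [le_div_iff₀ hφx]
        nlinarith [hx.1, mul_le_mul_of_nonneg_left hφx1 hx.1.le]
      · filter_upwards [hIoo] with x hx
        have hφx := hφpos x ⟨hx.1.le, hx.2.le⟩
        rw [div_le_one hφx]
        exact hφge x ⟨hx.1.le, hx.2.le⟩
    · filter_upwards [hIoo] with x hx
      have hφx := hφpos x ⟨hx.1.le, hx.2.le⟩
      have hψx := hψpos x ⟨hx.1.le, hx.2⟩
      show x / phi q p x < 1
      rw [div_lt_one hφx]; linarith
  have hψtend0 : Tendsto (fun x => phi q p x - x) (𝓝[<] (1:ℝ)) (𝓝 0) := by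
    have lim : Tendsto (fun t : ℝ => 1 - t) (𝓝[<] (1:ℝ)) (𝓝 0) := by
      have : Tendsto (fun t : ℝ => 1 - t) (𝓝 (1:ℝ)) (𝓝 (1 - 1)) :=
        (continuous_const.sub continuous_id).tendsto 1
      rw [show (1:ℝ) - 1 = 0 by ring] at this
      exact this.mono_left nhdsWithin_le_nhds
    apply squeeze_zero' (g := fun t : ℝ => 1 - t) ?lo ?hi lim
    case lo =>
      filter_upwards [hIoo] with t ht
      have := hφge t ⟨ht.1.le, ht.2.le⟩; linarith
    case hi =>
      filter_upwards [hIoo] with t ht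
      have := hφle t ⟨ht.1.le, ht.2.le⟩; linarith
  have hφtend1 : Tendsto (phi q p) (𝓝[<] (1:ℝ)) (𝓝 1) := by
    have hid : Tendsto (fun t : ℝ => t) (𝓝[<] (1:ℝ)) (𝓝 1) :=
      tendsto_id.mono_left nhdsWithin_le_nhds
    have := hψtend0.add hid
    rw [zero_add] at this
    apply this.congr
    intro x; simp
  have hφ1α : Tendsto (fun x => (phi q p x) ^ (1 - α)) (𝓝[<] (1:ℝ)) (𝓝 1) := by
    have := hφtend1.rpow_const (p := 1 - α) (Or.inr (by linarith))
    rwa [Real.one_rpow] at this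
  have hT : Tendsto (fun x => (1 - phiDeriv p x) / (phi q p x - x) ^ α) (𝓝[<] (1:ℝ)) (𝓝 c) := by
    have hcomp : Tendsto (fun x => (1 - (x / phi q p x) * phiDeriv p x) / (1 - x / phi q p x) ^ α)
        (𝓝[<] (1:ℝ)) (𝓝 c) := by
      apply (hH.comp hσtend).congr'
      filter_upwards [hIoo] with x hx
      simp only [Function.comp_apply]
      rw [hinv x ⟨hx.1.le, hx.2⟩]
    have hψ1α : Tendsto (fun x => (phi q p x - x) ^ (1 - α)) (𝓝[<] (1:ℝ)) (𝓝 0) := by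
      have := hψtend0.rpow_const (p := 1 - α) (Or.inr (by linarith))
      rwa [Real.zero_rpow (by linarith : (1:ℝ) - α ≠ 0)] at this
    have hxid : Tendsto (fun x : ℝ => x) (𝓝[<] (1:ℝ)) (𝓝 1) :=
      tendsto_id.mono_left nhdsWithin_le_nhds
    have hmain : Tendsto (fun x => ((1 - (x / phi q p x) * phiDeriv p x) / (1 - x / phi q p x) ^ α
        * (phi q p x) ^ (1 - α) - (phi q p x - x) ^ (1 - α)) / x)
        (𝓝[<] (1:ℝ)) (𝓝 ((c * 1 - 0) / 1)) :=
      ((hcomp.mul hφ1α).sub hψ1α).div hxid one_ne_zero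
    rw [show (c * 1 - 0) / 1 = c by ring] at hmain
    apply hmain.congr'
    filter_upwards [hIoo] with x hx
    have hxI : x ∈ Icc (0:ℝ) 1 := ⟨hx.1.le, hx.2.le⟩
    have hA : 0 < phi q p x := hφpos x hxI
    have hB : 0 < phi q p x - x := hψpos x ⟨hx.1.le, hx.2⟩
    have h1 : 1 - x / phi q p x = (phi q p x - x) / phi q p x := by
      field_simp
    rw [h1, Real.div_rpow hB.le hA.le]
    have hBα : (0:ℝ) < (phi q p x - x) ^ α := Real.rpow_pos_of_pos hB α
    have hAα : (0:ℝ) < (phi q p x) ^ α := Real.rpow_pos_of_pos hA α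
    have eA : (phi q p x) ^ (1-α) = phi q p x / (phi q p x) ^ α := by
      rw [Real.rpow_sub hA, Real.rpow_one]
    have eB : (phi q p x - x) ^ (1-α) = (phi q p x - x) / (phi q p x - x) ^ α := by
      rw [Real.rpow_sub hB, Real.rpow_one]
    rw [eA, eB]
    rw [div_eq_div_iff hx.1.ne' hBα.ne']
    field_simp
    ring
  have hMVT : Tendsto (fun x => (phi q p x - x) ^ (1 - α) / (1 - x)) (𝓝[<] (1:ℝ))
      (𝓝 ((1 - α) * c)) := by
    have hDlim : Tendsto (fun x => -((1 - α) * ((1 - phiDeriv p x) / (phi q p x - x) ^ α)))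
        (𝓝[<] (1:ℝ)) (𝓝 (-((1 - α) * c))) := (hT.const_mul (1 - α)).neg
    have hΨd : ∀ t ∈ Ioo (0:ℝ) 1, HasDerivAt (fun y => (phi q p y - y) ^ (1 - α))
        (-((1 - α) * ((1 - phiDeriv p t) / (phi q p t - t) ^ α))) t := by
      intro t ht
      have hB : 0 < phi q p t - t := hψpos t ⟨ht.1.le, ht.2⟩
      have hBα : (0:ℝ) < (phi q p t - t) ^ α := Real.rpow_pos_of_pos hB α
      have hd := (hDψ t (hsub ht)).rpow_const (p := 1 - α) (Or.inl hB.ne')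
      convert hd using 1
      rw [show (1 - α) - 1 = -α by ring, Real.rpow_neg hB.le]
      field_simp
      ring
    rw [Metric.tendsto_nhdsWithin_nhds] at hDlim ⊢
    intro ε hε
    obtain ⟨δ, hδ0, hδ⟩ := hDlim ε hε
    refine ⟨min δ 1, by positivity, ?_⟩
    intro x hxmem hdist
    have hx1 : x < 1 := hxmem
    rw [Real.dist_eq, abs_of_nonpos (by linarith)] at hdist
    have hdist' : 1 - x < min δ 1 := by linarith
    have hx0 : 0 < x := by
      have := lt_of_lt_of_le hdist' (min_le_right δ 1); linarith
    have hcont : ContinuousOn (fun y => (phi q p y - y) ^ (1 - α)) (Icc x 1) := by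
      apply ContinuousOn.rpow_const (hψcont.mono (Icc_subset_Icc hx0.le le_rfl))
      intro t _; right; linarith
    obtain ⟨ξ, hξ, hslope⟩ := exists_hasDerivAt_eq_slope
      (fun y => (phi q p y - y) ^ (1 - α))
      (fun t => -((1 - α) * ((1 - phiDeriv p t) / (phi q p t - t) ^ α))) hx1 hcont
      (fun t ht => hΨd t ⟨lt_trans hx0 ht.1, ht.2⟩)
    have hΨ1 : (phi q p 1 - 1 : ℝ) ^ (1 - α) = 0 := by
      rw [hφ1, sub_self]
      exact Real.zero_rpow (by linarith)
    have key : (phi q p x - x) ^ (1 - α) / (1 - x)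
        = -(-((1 - α) * ((1 - phiDeriv p ξ) / (phi q p ξ - ξ) ^ α))) := by
      rw [hslope, hΨ1]
      ring
    rw [Real.dist_eq, key]
    have hξdist : dist ξ 1 < δ := by
      rw [Real.dist_eq, abs_of_nonpos (by linarith [hξ.2])]
      have h1 := hξ.1
      have h2 := lt_of_lt_of_le hdist' (min_le_left δ 1)
      linarith
    have hres := hδ (show ξ ∈ Iio (1:ℝ) from hξ.2) hξdist
    rw [Real.dist_eq] at hres
    have heq : -(-((1 - α) * ((1 - phiDeriv p ξ) / (phi q p ξ - ξ) ^ α))) - (1 - α) * c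
        = -((-((1 - α) * ((1 - phiDeriv p ξ) / (phi q p ξ - ξ) ^ α))) - (-((1 - α) * c))) := by
      ring
    rw [heq, abs_neg]
    exact hres
  -- final assembly
  have hfin : Tendsto (fun x => (1 - x) * (phi q p x) ^ (1 - α) / (phi q p x - x) ^ (1 - α))
      (𝓝[<] (1:ℝ)) (𝓝 (((1 - α) * c)⁻¹ * 1)) := by
    have hinv' := hMVT.inv₀ (ne_of_gt (mul_pos (by linarith) hc))
    apply (hinv'.mul hφ1α).congr
    intro x
    rw [inv_div]
    ring
  have hcomp2 : Tendsto (fun s => (1 - h s) * (phi q p (h s)) ^ (1 - α)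
      / (phi q p (h s) - h s) ^ (1 - α)) (𝓝[<] (1:ℝ)) (𝓝 (((1 - α) * c)⁻¹ * 1)) :=
    hfin.comp hhtend
  rw [show ((1 - α) * c)⁻¹ * 1 = 1 / ((1 - α) * c) by rw [mul_one, one_div]] at hcomp2
  apply hcomp2.congr'
  filter_upwards [hIoo] with s hs
  have hsI : s ∈ Ico (0:ℝ) 1 := ⟨hs.1.le, hs.2⟩
  have hx : h s ∈ Ico (0:ℝ) 1 := hhmem s hsI
  have hA : 0 < phi q p (h s) := hφpos _ ⟨hx.1, hx.2.le⟩
  have hB : 0 < phi q p (h s) - h s := hψpos _ hx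
  have h2 := (hmin s ⟨hs.1.le, hs.2.le⟩).2.1
  have h1x : (0:ℝ) < 1 - h s := by linarith [hx.2]
  have h1s : 1 - s = (phi q p (h s) - h s) / phi q p (h s) := by
    rw [eq_div_iff hA.ne']
    linear_combination h2
  have hinner : 1 - s * (1 - phi q p (h s)) / (1 - h s) = (1 - s) / (1 - h s) := by
    rw [eq_div_iff h1x.ne']
    field_simp
    linear_combination -h2
  rw [hinner, one_div_div, h1s, Real.div_rpow hB.le hA.le]
  have hBα : (0:ℝ) < (phi q p (h s) - h s) ^ α := Real.rpow_pos_of_pos hB α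
  have hAα : (0:ℝ) < (phi q p (h s)) ^ α := Real.rpow_pos_of_pos hA α
  have eA : (phi q p (h s)) ^ (1-α) = phi q p (h s) / (phi q p (h s)) ^ α := by
    rw [Real.rpow_sub hA, Real.rpow_one]
  have eB : (phi q p (h s) - h s) ^ (1-α)
      = (phi q p (h s) - h s) / (phi q p (h s) - h s) ^ α := by
    rw [Real.rpow_sub hB, Real.rpow_one]
  rw [eA, eB]
  field_simp
end

section
/- lim_{s→1−} (1 − s·φ′(h(s)))/(1−s)^{β/(1+β)} = γ^{1/(1+β)}·(1+β)^{β/(1+β)}; in particular, Assumption (H) holds with α = β/(1+β) and c = γ^{1/(1+β)}·(1+β)^{β/(1+β)}. -/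
open MeasureTheory ProbabilityTheory Filter Topology

/-- Lemma 8: for `φ(s) = s + γ/(1+β) (1−s)^{1+β}`,
`(1 − s φ'(h(s)))/(1−s)^{β/(1+β)} → γ^{1/(1+β)} (1+β)^{β/(1+β)}` as `s → 1−`; in
particular Assumption (H) holds with `α = β/(1+β)` and `c = γ^{1/(1+β)} (1+β)^{β/(1+β)}`. -/
theorem assumption_H_stable (β γ : ℝ) (hβ : β ∈ Set.Ioo (0 : ℝ) 1)
    (hγ : γ ∈ Set.Ioo (0 : ℝ) 1) (φ : ℝ → ℝ)
    (hφ : ∀ s, φ s = s + γ / (1 + β) * (1 - s) ^ (1 + β))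
    (h : ℝ → ℝ) (hmin : IsMinimalSolution φ h) :
    Tendsto (fun s => (1 - s * deriv φ (h s)) / (1 - s) ^ (β / (1 + β)))
      (𝓝[<] (1 : ℝ)) (𝓝 (γ ^ (1 / (1 + β)) * (1 + β) ^ (β / (1 + β)))) ∧
    β / (1 + β) ∈ Set.Ioo (0 : ℝ) 1 ∧
    0 < γ ^ (1 / (1 + β)) * (1 + β) ^ (β / (1 + β)) := by
  obtain ⟨hβ0, hβ1⟩ := hβ
  obtain ⟨hγ0, hγ1⟩ := hγ
  have hp : (0:ℝ) < 1 + β := by linarith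
  have hp1 : (1:ℝ) ≤ 1 + β := by linarith
  have hpne : (1 + β) ≠ 0 := ne_of_gt hp
  set α : ℝ := β / (1 + β) with hα
  have hα0 : 0 < α := div_pos hβ0 hp
  have hα1 : α < 1 := by
    rw [hα, div_lt_one hp]; linarith
  have hq0 : 0 < 1 / (1 + β) := by positivity
  -- derivative of φ
  have hderiv : ∀ x : ℝ, deriv φ x = 1 - γ * (1 - x) ^ β := by
    intro x
    have h1 : HasDerivAt (fun y : ℝ => 1 - y) (-1) x := by
      simpa using (hasDerivAt_id x).const_sub 1
    have h2 : HasDerivAt (fun y : ℝ => (1 - y) ^ (1 + β))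
        ((-1) * (1 + β) * (1 - x) ^ ((1 + β) - 1)) x :=
      h1.rpow_const (Or.inr hp1)
    have h3 : HasDerivAt φ (1 - γ * (1 - x) ^ β) x := by
      have h4 := (hasDerivAt_id' x).add (h2.const_mul (γ / (1 + β)))
      have hfe : φ = fun y => y + γ / (1 + β) * (1 - y) ^ (1 + β) := funext hφ
      rw [hfe]
      refine HasDerivAt.congr_deriv h4 ?_
      rw [show (1 + β) - 1 = β by ring]
      field_simp
      ring
    rw [h3.deriv]
  -- basic facts about h
  have hmem : ∀ s ∈ Set.Ioo (0:ℝ) 1, h s ∈ Set.Icc (0:ℝ) 1 := fun s hs =>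
    (hmin s ⟨hs.1.le, hs.2.le⟩).1
  -- fixed point identity
  have key : ∀ s ∈ Set.Ioo (0:ℝ) 1,
      (1 - h s) ^ (1 + β) = (1 + β) * (h s) * (1 - s) / (s * γ) := by
    intro s hs
    have e := (hmin s ⟨hs.1.le, hs.2.le⟩).2.1
    rw [hφ] at e
    have hs0 : (0:ℝ) < s := hs.1
    have hsγ : 0 < s * γ := mul_pos hs0 hγ0
    field_simp at e
    rw [eq_div_iff (ne_of_gt hsγ)]
    nlinarith [e]
  -- h tends to 1
  have hb_tendsto : Tendsto (fun s : ℝ => ((1 + β) * (1 - s) / (s * γ)) ^ (1 / (1 + β)))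
      (𝓝[<] (1:ℝ)) (𝓝 0) := by
    have hg : Tendsto (fun s : ℝ => (1 + β) * (1 - s) / (s * γ)) (𝓝[<] (1:ℝ)) (𝓝 0) := by
      have hc : ContinuousAt (fun s : ℝ => (1 + β) * (1 - s) / (s * γ)) 1 := by
        apply ContinuousAt.div
        · fun_prop
        · fun_prop
        · simp [ne_of_gt hγ0]
      have := hc.tendsto.mono_left (nhdsWithin_le_nhds (s := Set.Iio (1:ℝ)))
      simpa using this
    have hc2 : ContinuousAt (fun t : ℝ => t ^ (1 / (1 + β))) 0 :=
      Real.continuousAt_rpow_const 0 _ (Or.inr hq0.le)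
    have := hc2.tendsto.comp hg
    simpa [Function.comp_def, one_div, Real.zero_rpow (inv_ne_zero hpne)] using this
  have hIoo : Set.Ioo (0:ℝ) 1 ∈ 𝓝[<] (1:ℝ) :=
    Ioo_mem_nhdsLT_of_mem (by norm_num : (1:ℝ) ∈ Set.Ioc (0:ℝ) 1)
  have htendh : Tendsto h (𝓝[<] (1:ℝ)) (𝓝 1) := by
    have hlow : ∀ s ∈ Set.Ioo (0:ℝ) 1,
        1 - ((1 + β) * (1 - s) / (s * γ)) ^ (1 / (1 + β)) ≤ h s := by
      intro s hs
      obtain ⟨hh0, hh1⟩ := hmem s hs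
      have hu0 : 0 ≤ 1 - h s := by linarith
      have hs0 : (0:ℝ) < s := hs.1
      have ht0 : (0:ℝ) < 1 - s := by linarith [hs.2]
      have hsγ : 0 < s * γ := mul_pos hs0 hγ0
      have hle : (1 - h s) ^ (1 + β) ≤ (1 + β) * (1 - s) / (s * γ) := by
        rw [key s hs]
        refine (div_le_div_iff_of_pos_right hsγ).mpr ?_
        nlinarith [mul_pos hp ht0]
      have h5 : ((1 - h s) ^ (1 + β)) ^ (1 / (1 + β)) ≤
          ((1 + β) * (1 - s) / (s * γ)) ^ (1 / (1 + β)) :=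
        Real.rpow_le_rpow (Real.rpow_nonneg hu0 _) hle hq0.le
      rw [← Real.rpow_mul hu0, mul_one_div, div_self hpne, Real.rpow_one] at h5
      linarith
    have hl : Tendsto (fun s : ℝ => 1 - ((1 + β) * (1 - s) / (s * γ)) ^ (1 / (1 + β)))
        (𝓝[<] (1:ℝ)) (𝓝 1) := by
      have := (tendsto_const_nhds (x := (1:ℝ))).sub hb_tendsto
      simpa using this
    refine tendsto_of_tendsto_of_tendsto_of_le_of_le' hl tendsto_const_nhds ?_ ?_
    · filter_upwards [hIoo] with s hs using hlow s hs
    · filter_upwards [hIoo] with s hs using (hmem s hs).2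
  -- the key rewriting of the ratio
  have hEq : ∀ s ∈ Set.Ioo (0:ℝ) 1,
      (1 - s * deriv φ (h s)) / (1 - s) ^ α =
      (1 - s) ^ (1 / (1 + β)) + (s * γ) ^ (1 / (1 + β)) * ((1 + β) * h s) ^ α := by
    intro s hs
    obtain ⟨hh0, hh1⟩ := hmem s hs
    have hu0 : 0 ≤ 1 - h s := by linarith
    have hs0 : (0:ℝ) < s := hs.1
    have ht0 : (0:ℝ) < 1 - s := by linarith [hs.2]
    have hsγ : 0 < s * γ := mul_pos hs0 hγ0
    have hnum : 1 - s * deriv φ (h s) = (1 - s) + s * γ * (1 - h s) ^ β := by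
      rw [hderiv]; ring
    have huβ : (1 - h s) ^ β =
        ((1 + β) * h s) ^ α * (1 - s) ^ α / (s * γ) ^ α := by
      have e1 : (1 - h s) ^ β = ((1 - h s) ^ (1 + β)) ^ α := by
        rw [← Real.rpow_mul hu0]
        congr 1
        rw [hα]
        field_simp
      rw [e1, key s hs]
      rw [Real.div_rpow (by positivity) hsγ.le, Real.mul_rpow (by positivity) ht0.le]
    rw [hnum, huβ]
    have hαpow : (0:ℝ) < (1 - s) ^ α := Real.rpow_pos_of_pos ht0 _
    have hsγpow : (0:ℝ) < (s * γ) ^ α := Real.rpow_pos_of_pos hsγ _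
    have e3 : s * γ / (s * γ) ^ α = (s * γ) ^ (1 / (1 + β)) := by
      nth_rewrite 1 [← Real.rpow_one (s * γ)]
      rw [← Real.rpow_sub hsγ]
      congr 1
      rw [hα]; field_simp; ring
    have e2' : (1 - s) = (1 - s) ^ (1 / (1 + β)) * (1 - s) ^ α := by
      rw [← Real.rpow_add ht0]
      have hone : 1 / (1 + β) + α = 1 := by rw [hα]; field_simp
      rw [hone, Real.rpow_one]
    rw [div_eq_iff (ne_of_gt hαpow)]
    have hc : s * γ * (((1 + β) * h s) ^ α * (1 - s) ^ α / (s * γ) ^ α) =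
        (s * γ) ^ (1 / (1 + β)) * (((1 + β) * h s) ^ α * (1 - s) ^ α) := by
      rw [show s * γ * (((1 + β) * h s) ^ α * (1 - s) ^ α / (s * γ) ^ α) =
        (s * γ / (s * γ) ^ α) * (((1 + β) * h s) ^ α * (1 - s) ^ α) by ring, e3]
    rw [hc]
    nth_rewrite 1 [e2']
    ring
  -- limit of the right-hand side
  have hlim : Tendsto (fun s : ℝ =>
      (1 - s) ^ (1 / (1 + β)) + (s * γ) ^ (1 / (1 + β)) * ((1 + β) * h s) ^ α)
      (𝓝[<] (1:ℝ)) (𝓝 (γ ^ (1 / (1 + β)) * (1 + β) ^ α)) := by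
    have t1 : Tendsto (fun s : ℝ => (1 - s) ^ (1 / (1 + β))) (𝓝[<] (1:ℝ)) (𝓝 0) := by
      have hg : Tendsto (fun s : ℝ => 1 - s) (𝓝[<] (1:ℝ)) (𝓝 0) := by
        have : ContinuousAt (fun s : ℝ => 1 - s) 1 := by fun_prop
        simpa using this.tendsto.mono_left nhdsWithin_le_nhds
      have hc2 : ContinuousAt (fun t : ℝ => t ^ (1 / (1 + β))) 0 :=
        Real.continuousAt_rpow_const 0 _ (Or.inr hq0.le)
      have := hc2.tendsto.comp hg
      simpa [Function.comp_def, one_div, Real.zero_rpow (inv_ne_zero hpne)] using this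
    have t2 : Tendsto (fun s : ℝ => (s * γ) ^ (1 / (1 + β))) (𝓝[<] (1:ℝ))
        (𝓝 (γ ^ (1 / (1 + β)))) := by
      have hc : ContinuousAt (fun s : ℝ => (s * γ) ^ (1 / (1 + β))) 1 := by
        apply ContinuousAt.comp (g := fun t : ℝ => t ^ (1 / (1 + β)))
        · exact Real.continuousAt_rpow_const _ _ (Or.inl (by simpa using ne_of_gt hγ0))
        · fun_prop
      simpa using hc.tendsto.mono_left nhdsWithin_le_nhds
    have t3 : Tendsto (fun s : ℝ => ((1 + β) * h s) ^ α) (𝓝[<] (1:ℝ))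
        (𝓝 ((1 + β) ^ α)) := by
      have hg : Tendsto (fun s : ℝ => (1 + β) * h s) (𝓝[<] (1:ℝ)) (𝓝 (1 + β)) := by
        have := htendh.const_mul (1 + β)
        simpa using this
      have hc2 : ContinuousAt (fun t : ℝ => t ^ α) (1 + β) :=
        Real.continuousAt_rpow_const _ _ (Or.inl hpne)
      exact hc2.tendsto.comp hg
    have := t1.add (t2.mul t3)
    simpa using this
  refine ⟨?_, ⟨hα0, hα1⟩, by positivity⟩
  refine Tendsto.congr' ?_ hlim
  filter_upwards [hIoo] with s hs
  exact (hEq s hs).symm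
end
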